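/- arXiv:1809.10015 — 4 statements merged into one kernel-verified Lean document; each statement's English description precedes it below -/
import Mathlib

section
/- Let X be a Riesz space with ideals X₁, ..., Xₙ ⊆ X such that X = X₁ + ... + Xₙ, and let gᵢ : X → (-∞, ∞] be functions such that gᵢ is monotone on Xᵢ (X, Y ∈ Xᵢ with X ≤ Y implies gᵢ(X) ≤ gᵢ(Y)) and gᵢ ≡ ∞ on X \ Xᵢ. Then the infimal convolution □ᵢ gᵢ, defined by (□ᵢ gᵢ)(X) = inf{Σᵢ gᵢ(Xᵢ) | X₁ + ... + Xₙ = X}, is monotone on X. -/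
/-- A sum of nonnegative elements is nonnegative (no ordered monoid instance needed). -/
theorem sum_nonneg' {X : Type*} [AddCommGroup X] [Lattice X]
    [CovariantClass X X (· + ·) (· ≤ ·)] {ι : Type*}
    (s : Finset ι) (a : ι → X) (ha : ∀ i ∈ s, 0 ≤ a i) : 0 ≤ ∑ i ∈ s, a i := by
  induction s using Finset.cons_induction with
  | empty => simp
  | cons i t hit ih =>
    rw [Finset.sum_cons]
    have h1 : 0 ≤ a i := ha i (Finset.mem_cons_self i t)
    have h2 : 0 ≤ ∑ j ∈ t, a j := ih fun j hj => ha j (Finset.mem_cons_of_mem hj)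
    simpa using add_le_add h1 h2

/-- Sums are monotone (no ordered monoid instance needed). -/
theorem sum_le_sum'' {X : Type*} [AddCommGroup X] [Lattice X]
    [CovariantClass X X (· + ·) (· ≤ ·)] {ι : Type*}
    (s : Finset ι) (a b : ι → X) (h : ∀ i ∈ s, a i ≤ b i) :
    ∑ i ∈ s, a i ≤ ∑ i ∈ s, b i := by
  induction s using Finset.cons_induction with
  | empty => simp
  | cons i t hit ih =>
    rw [Finset.sum_cons, Finset.sum_cons]
    exact add_le_add (h i (Finset.mem_cons_self i t))
      (ih fun j hj => h j (Finset.mem_cons_of_mem hj))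

/-- A finite sum of EReals none of which is `⊥` is not `⊥`. -/
theorem sum_ne_bot {ι : Type*} (s : Finset ι) (h : ι → EReal)
    (hh : ∀ i ∈ s, h i ≠ ⊥) : ∑ i ∈ s, h i ≠ ⊥ := by
  induction s using Finset.cons_induction with
  | empty => simp
  | cons i t hit ih =>
    rw [Finset.sum_cons]
    intro hb
    rcases EReal.add_eq_bot_iff.1 hb with h1 | h2
    · exact hh i (Finset.mem_cons_self i t) h1
    · exact ih (fun k hk => hh k (Finset.mem_cons_of_mem hk)) h2

/-- Riesz decomposition property in a lattice-ordered abelian group: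
if `0 ≤ w ≤ ∑ i in s, a i` with each `a i ≥ 0`, then `w` splits as a sum of
pieces `v i` with `0 ≤ v i ≤ a i`. -/
theorem riesz_decomp {X : Type*} [AddCommGroup X] [Lattice X]
    [CovariantClass X X (· + ·) (· ≤ ·)] {ι : Type*} [DecidableEq ι]
    (s : Finset ι) (a : ι → X) (ha : ∀ i ∈ s, 0 ≤ a i) :
    ∀ w : X, 0 ≤ w → w ≤ ∑ i ∈ s, a i →
      ∃ v : ι → X, (∀ i ∈ s, 0 ≤ v i ∧ v i ≤ a i) ∧ ∑ i ∈ s, v i = w := by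
  induction s using Finset.cons_induction with
  | empty =>
    intro w hw0 hw
    refine ⟨0, by simp, ?_⟩
    simp only [Finset.sum_empty] at hw ⊢
    exact (le_antisymm hw hw0).symm
  | cons i t hit ih =>
    intro w hw0 hw
    rw [Finset.sum_cons] at hw
    have hai : 0 ≤ a i := ha i (Finset.mem_cons_self i t)
    have hat : ∀ j ∈ t, 0 ≤ a j := fun j hj => ha j (Finset.mem_cons_of_mem hj)
    have hw₁0 : 0 ≤ w ⊓ a i := le_inf hw0 hai
    have hw₁a : w ⊓ a i ≤ a i := inf_le_right
    have hw₂0 : 0 ≤ w - w ⊓ a i := sub_nonneg.2 inf_le_left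
    have hsumt : 0 ≤ ∑ j ∈ t, a j := sum_nonneg' t a hat
    have hw₂le : w - w ⊓ a i ≤ ∑ j ∈ t, a j := by
      have key : w - w ⊓ a i = (w - w) ⊔ (w - a i) := by
        rw [sub_eq_add_neg, neg_inf, add_sup, ← sub_eq_add_neg, ← sub_eq_add_neg]
      rw [key, sub_self]
      exact sup_le hsumt (by rwa [sub_le_iff_le_add'])
    obtain ⟨v, hv, hvsum⟩ := ih hat (w - w ⊓ a i) hw₂0 hw₂le
    refine ⟨Function.update v i (w ⊓ a i), ?_, ?_⟩
    · intro j hj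
      rcases Finset.mem_cons.1 hj with rfl | hj
      · rw [Function.update_self]
        exact ⟨hw₁0, hw₁a⟩
      · rw [Function.update_of_ne (ne_of_mem_of_not_mem hj hit)]
        exact hv j hj
    · rw [Finset.sum_cons, Function.update_self,
        Finset.sum_congr rfl
          (fun j hj => Function.update_of_ne (ne_of_mem_of_not_mem hj hit) _ _),
        hvsum]
      abel

/-- If `X` is a Riesz space covered by ideals `Xᵢ` with `X = X₁ + ... + Xₙ`, and the
functions `gᵢ : X → (-∞, ∞]` are monotone on `Xᵢ` and `≡ ∞` off `Xᵢ`, then the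
infimal convolution of the `gᵢ` is monotone on `X`. -/
theorem infConv_monotone {X : Type*} [AddCommGroup X] [Lattice X]
    [CovariantClass X X (· + ·) (· ≤ ·)] [Module ℝ X]
    {n : ℕ} (I : Fin n → Submodule ℝ X)
    (hideal : ∀ i, ∀ y ∈ I i, ∀ z : X, |z| ≤ |y| → z ∈ I i)
    (hsum : ∀ x : X, ∃ f : Fin n → X, (∀ i, f i ∈ I i) ∧ ∑ i, f i = x)
    (g : Fin n → X → EReal) (hbot : ∀ i x, g i x ≠ ⊥)
    (hmonoI : ∀ i, ∀ x ∈ I i, ∀ y ∈ I i, x ≤ y → g i x ≤ g i y)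
    (hinf : ∀ i, ∀ x : X, x ∉ I i → g i x = ⊤)
    {x y : X} (hxy : x ≤ y) :
    sInf {s : EReal | ∃ f : Fin n → X, ∑ i, f i = x ∧ s = ∑ i, g i (f i)} ≤
      sInf {s : EReal | ∃ f : Fin n → X, ∑ i, f i = y ∧ s = ∑ i, g i (f i)} := by
  apply le_sInf
  rintro s ⟨f, hfy, rfl⟩
  by_cases hfI : ∀ i, f i ∈ I i
  · -- construct a decomposition of x
    obtain ⟨u, huI, husum⟩ := hsum (y - x)
    have hw0 : (0 : X) ≤ y - x := sub_nonneg.2 hxy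
    have hwle : y - x ≤ ∑ i, |u i| := by
      rw [← husum]
      exact sum_le_sum'' _ _ _ fun i _ => le_abs_self _
    obtain ⟨v, hv, hvsum⟩ :=
      riesz_decomp Finset.univ (fun i => |u i|) (fun i _ => abs_nonneg _) (y - x) hw0 hwle
    have hvI : ∀ i, v i ∈ I i := fun i => by
      refine hideal i (u i) (huI i) (v i) ?_
      rw [abs_of_nonneg (hv i (Finset.mem_univ i)).1]
      exact (hv i (Finset.mem_univ i)).2
    have hle : ∑ i, g i (f i - v i) ≤ ∑ i, g i (f i) :=
      Finset.sum_le_sum fun i _ =>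
        hmonoI i _ (Submodule.sub_mem _ (hfI i) (hvI i)) _ (hfI i)
          (sub_le_self _ (hv i (Finset.mem_univ i)).1)
    refine le_trans (sInf_le ⟨fun i => f i - v i, ?_, rfl⟩) hle
    rw [Finset.sum_sub_distrib, hfy, hvsum]
    abel
  · push_neg at hfI
    obtain ⟨i, hi⟩ := hfI
    have : ∑ j, g j (f j) = ⊤ := by
      have hne : ∀ j ∈ Finset.univ, g j (f j) ≠ ⊥ := fun j _ => hbot j (f j)
      have := hinf i (f i) hi
      calc ∑ j, g j (f j) = g i (f i) + ∑ j ∈ Finset.univ.erase i, g j (f j) := by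
            rw [← Finset.add_sum_erase _ _ (Finset.mem_univ i)]
        _ = ⊤ := by
            rw [this, EReal.top_add_of_ne_bot]
            exact sum_ne_bot _ _ fun j hj => hbot j (f j)
    rw [this]
    exact le_top
end

section
/- Let C be a nonempty closed convex subset of a locally convex Hausdorff topological vector space and u ∈ X. Then u ∈ 0⁺C (i.e., y + ku ∈ C for all y ∈ C and k ≥ 0) if and only if y + u ∈ C for all y ∈ C. -/
theorem add_nsmul_mem_of_forall_add_mem {M : Type*} [AddMonoid M] {C : Set M} {u : M}
    (h : ∀ y ∈ C, y + u ∈ C) {y : M} (hy : y ∈ C) (n : ℕ) : y + n • u ∈ C := by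
  induction n with
  | zero => simpa using hy
  | succ n ih => simpa only [succ_nsmul, ← add_assoc] using h _ ih

/-- For a natural `n ≥ k`, the point `y + k • u` lies `k / n` of the way from `y` to `y + n • u`. -/
theorem Convex.add_smul_mem_of_forall_add_nsmul_mem {𝕜 E : Type*} [Field 𝕜] [LinearOrder 𝕜]
    [IsStrictOrderedRing 𝕜] [Archimedean 𝕜] [AddCommGroup E] [Module 𝕜 E] {C : Set E}
    (hconv : Convex 𝕜 C) {y u : E} (hy : y ∈ C) (hnat : ∀ n : ℕ, y + n • u ∈ C)
    {k : 𝕜} (hk : 0 ≤ k) : y + k • u ∈ C := by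
  obtain ⟨n, hkn⟩ := exists_nat_ge k
  rcases hk.eq_or_lt with rfl | hk_pos
  · simpa using hy
  have hn_pos : (0 : 𝕜) < n := hk_pos.trans_le hkn
  have hmem := hconv.add_smul_mem hy (hnat n)
    ⟨div_nonneg hk hn_pos.le, (div_le_one hn_pos).mpr hkn⟩
  rwa [← Nat.cast_smul_eq_nsmul 𝕜, smul_smul, div_mul_cancel₀ k hn_pos.ne'] at hmem

theorem mem_recessionCone_iff_general {X : Type*} [AddCommGroup X] [Module ℝ X]
    (C : Set X) (hconv : Convex ℝ C)
    (u : X) :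
    (∀ y ∈ C, ∀ k : ℝ, 0 ≤ k → y + k • u ∈ C) ↔ (∀ y ∈ C, y + u ∈ C) := by
  constructor
  · intro h y hy
    simpa using h y hy 1 zero_le_one
  · intro h y hy k hk
    exact hconv.add_smul_mem_of_forall_add_nsmul_mem hy (add_nsmul_mem_of_forall_add_mem h hy) hk

/-- For a nonempty closed convex set `C` in a locally convex Hausdorff topological
vector space, `u` belongs to the recession cone of `C` if and only if
`y + u ∈ C` for every `y ∈ C`. -/
theorem mem_recessionCone_iff {X : Type*} [AddCommGroup X] [Module ℝ X]
    [TopologicalSpace X] [IsTopologicalAddGroup X] [ContinuousSMul ℝ X]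
    [LocallyConvexSpace ℝ X] [T2Space X]
    (C : Set X) (hne : C.Nonempty) (hclosed : IsClosed C) (hconv : Convex ℝ C)
    (u : X) :
    (∀ y ∈ C, ∀ k : ℝ, 0 ≤ k → y + k • u ∈ C) ↔ (∀ y ∈ C, y + u ∈ C) :=
  mem_recessionCone_iff_general C hconv u
end

section
/- Let (Ω, F, P) be a probability space, β, γ > 0, and for α > 0 define the entropic risk measure ξ_α(X) = (1/α) log E[e^{αX}] on the space of X where the expectation is finite. Then the infimal convolution of ξ_β and ξ_γ equals ξ_{βγ/(β+γ)}: for all X, inf{ξ_β(X₁) + ξ_γ(X₂) | X₁ + X₂ = X} = ξ_{βγ/(β+γ)}(X), and the infimum is attained by X₁ = (γ/(β+γ))X, X₂ = (β/(β+γ))X. -/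
/-!
Hölder's inequality with the conjugate exponents `p = (β + γ)/γ`, `q = (β + γ)/β` bounds
`E[e^{α(X₁ + X₂)}]` by `E[e^{βX₁}]^{1/p} E[e^{γX₂}]^{1/q}` for `α = βγ/(β + γ)`; taking logarithms
gives `ξ_α(X₁ + X₂) ≤ ξ_β(X₁) + ξ_γ(X₂)`. Conversely, `ξ_a(cX) = c ξ_{ac}(X)`, so the
proportional split contributes `γ/(β + γ)` and `β/(β + γ)` of `ξ_α(X)`.
-/

open MeasureTheory

/-- The entropic risk measure with parameter `α`:
`ξ_α(X) = (1/α) log E[e^{αX}] ∈ (-∞, ∞]`. -/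
noncomputable def entropic {Ω : Type*} [MeasurableSpace Ω] (μ : Measure Ω)
    (α : ℝ) (X : Ω → ℝ) : EReal :=
  ((1 / α : ℝ) : EReal) * ENNReal.log (∫⁻ ω, ENNReal.ofReal (Real.exp (α * X ω)) ∂μ)

open ENNReal

section Entropic

variable {Ω : Type*} [MeasurableSpace Ω] (μ : Measure Ω)

noncomputable def expMoment (α : ℝ) (X : Ω → ℝ) : ℝ≥0∞ :=
  ∫⁻ ω, ENNReal.ofReal (Real.exp (α * X ω)) ∂μ

lemma entropic_eq_mul_log_expMoment (α : ℝ) (X : Ω → ℝ) :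
    entropic μ α X = ((1 / α : ℝ) : EReal) * log (expMoment μ α X) := rfl

lemma expMoment_smul (a c : ℝ) (X : Ω → ℝ) : expMoment μ a (c • X) = expMoment μ (a * c) X := by
  simp only [expMoment, Pi.smul_apply, smul_eq_mul, mul_assoc]

lemma entropic_smul {c : ℝ} (hc : c ≠ 0) (a : ℝ) (X : Ω → ℝ) :
    entropic μ a (c • X) = c * entropic μ (a * c) X := by
  rw [entropic_eq_mul_log_expMoment, entropic_eq_mul_log_expMoment, expMoment_smul, ← mul_assoc,
    ← EReal.coe_mul, mul_one_div, div_mul_cancel_right₀ hc, one_div]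

lemma expMoment_add_le {α p q : ℝ} (hpq : p.HolderConjugate q) {X₁ X₂ : Ω → ℝ}
    (h₁ : AEMeasurable X₁ μ) (h₂ : AEMeasurable X₂ μ) :
    expMoment μ α (X₁ + X₂) ≤
      expMoment μ (α * p) X₁ ^ (1 / p) * expMoment μ (α * q) X₂ ^ (1 / q) := by
  have hexp_rpow (Y : Ω → ℝ) (r : ℝ) (ω : Ω) :
      ENNReal.ofReal (Real.exp (α * Y ω)) ^ r = ENNReal.ofReal (Real.exp (α * r * Y ω)) := by
    rw [ENNReal.ofReal_rpow_of_pos (Real.exp_pos _), ← Real.exp_mul, mul_right_comm]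
  have hmeas {Y : Ω → ℝ} (hY : AEMeasurable Y μ) :
      AEMeasurable (fun ω ↦ ENNReal.ofReal (Real.exp (α * Y ω))) μ := by fun_prop
  convert lintegral_mul_le_Lp_mul_Lq μ hpq (hmeas h₁) (hmeas h₂) using 1
  · refine lintegral_congr fun ω ↦ ?_
    rw [Pi.add_apply, mul_add, Real.exp_add, ENNReal.ofReal_mul (Real.exp_pos _).le, Pi.mul_apply]
  · simp only [expMoment, hexp_rpow]

lemma entropic_add_le_of_holderConjugate {α p q : ℝ} (hα : 0 < α) (hpq : p.HolderConjugate q)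
    {X₁ X₂ : Ω → ℝ} (h₁ : AEMeasurable X₁ μ) (h₂ : AEMeasurable X₂ μ) :
    entropic μ α (X₁ + X₂) ≤ entropic μ (α * p) X₁ + entropic μ (α * q) X₂ := by
  have hcoe_div_mul (r : ℝ) :
      ((1 / α : ℝ) : EReal) * ((1 / r : ℝ) : EReal) = ((1 / (α * r) : ℝ) : EReal) := by
    rw [← EReal.coe_mul, one_div_mul_one_div]
  calc entropic μ α (X₁ + X₂)
      ≤ ((1 / α : ℝ) : EReal) *
          log (expMoment μ (α * p) X₁ ^ (1 / p) * expMoment μ (α * q) X₂ ^ (1 / q)) :=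
        mul_le_mul_of_nonneg_left (log_monotone (expMoment_add_le μ hpq h₁ h₂))
          (EReal.coe_nonneg.2 (by positivity))
    _ = entropic μ (α * p) X₁ + entropic μ (α * q) X₂ := by
        rw [log_mul_add, log_rpow, log_rpow,
          EReal.left_distrib_of_nonneg_of_ne_top (EReal.coe_nonneg.2 (by positivity))
            (EReal.coe_ne_top _),
          ← mul_assoc, ← mul_assoc, hcoe_div_mul, hcoe_div_mul]
        rfl

lemma entropic_add_le {β γ : ℝ} (hβ : 0 < β) (hγ : 0 < γ) {X₁ X₂ : Ω → ℝ}
    (h₁ : AEMeasurable X₁ μ) (h₂ : AEMeasurable X₂ μ) :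
    entropic μ (β * γ / (β + γ)) (X₁ + X₂) ≤ entropic μ β X₁ + entropic μ γ X₂ := by
  have hpq : ((β + γ) / γ).HolderConjugate ((β + γ) / β) :=
    ⟨by field_simp; ring, by positivity, by positivity⟩
  have hp : β * γ / (β + γ) * ((β + γ) / γ) = β := by field_simp
  have hq : β * γ / (β + γ) * ((β + γ) / β) = γ := by field_simp
  simpa only [hp, hq] using
    entropic_add_le_of_holderConjugate μ (α := β * γ / (β + γ)) (by positivity) hpq h₁ h₂

lemma entropic_smul_add_entropic_smul {β γ : ℝ} (hβ : 0 < β) (hγ : 0 < γ) (X : Ω → ℝ) :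
    entropic μ β ((γ / (β + γ)) • X) + entropic μ γ ((β / (β + γ)) • X) =
      entropic μ (β * γ / (β + γ)) X := by
  have hβγ : 0 < β + γ := add_pos hβ hγ
  rw [entropic_smul μ (by positivity), entropic_smul μ (by positivity), mul_div_assoc',
    mul_div_assoc', mul_comm γ β,
    ← EReal.right_distrib_of_nonneg (EReal.coe_nonneg.2 (by positivity))
      (EReal.coe_nonneg.2 (by positivity)),
    ← EReal.coe_add, ← add_div, add_comm γ, div_self hβγ.ne', EReal.coe_one, one_mul]

end Entropic

theorem entropic_infConv_general {Ω : Type*} [MeasurableSpace Ω] (μ : Measure Ω)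
    (β γ : ℝ) (hβ : 0 < β) (hγ : 0 < γ)
    (X : Ω → ℝ) (hX : Integrable X μ) :
    sInf {s : EReal | ∃ X₁ X₂ : Ω → ℝ, Integrable X₁ μ ∧ Integrable X₂ μ ∧
        X₁ + X₂ = X ∧ s = entropic μ β X₁ + entropic μ γ X₂} =
      entropic μ (β * γ / (β + γ)) X ∧
    entropic μ β ((γ / (β + γ)) • X) + entropic μ γ ((β / (β + γ)) • X) =
      entropic μ (β * γ / (β + γ)) X := by
  have hsplit := entropic_smul_add_entropic_smul μ hβ hγ X
  refine ⟨le_antisymm ?_ (le_sInf ?_), hsplit⟩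
  · refine hsplit ▸ sInf_le ⟨_, _, hX.smul _, hX.smul _, ?_, rfl⟩
    rw [← add_smul, ← add_div, add_comm γ, div_self (add_pos hβ hγ).ne', one_smul]
  · rintro _ ⟨X₁, X₂, h₁, h₂, rfl, rfl⟩
    exact entropic_add_le μ hβ hγ h₁.aemeasurable h₂.aemeasurable

/-- The infimal convolution of the entropic risk measures `ξ_β` and `ξ_γ` equals
`ξ_{βγ/(β+γ)}`, and the infimum is attained by the proportional split
`X₁ = (γ/(β+γ))X`, `X₂ = (β/(β+γ))X`. -/
theorem entropic_infConv {Ω : Type*} [MeasurableSpace Ω] (μ : Measure Ω)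
    [IsProbabilityMeasure μ] (β γ : ℝ) (hβ : 0 < β) (hγ : 0 < γ)
    (X : Ω → ℝ) (hX : Integrable X μ) :
    sInf {s : EReal | ∃ X₁ X₂ : Ω → ℝ, Integrable X₁ μ ∧ Integrable X₂ μ ∧
        X₁ + X₂ = X ∧ s = entropic μ β X₁ + entropic μ γ X₂} =
      entropic μ (β * γ / (β + γ)) X ∧
    entropic μ β ((γ / (β + γ)) • X) + entropic μ γ ((β / (β + γ)) • X) =
      entropic μ (β * γ / (β + γ)) X :=
  entropic_infConv_general μ β γ hβ hγ X hX
end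

section
/- Let (ρᵢ)_{i ∈ ℕ} be proper convex functions on a topological vector space X with ρᵢ(0) = 0, and suppose there exists φ₀ ∈ X* with Σ_{i=1}^∞ ρᵢ*(φ₀) < ∞. Let c : ℕ → [0, ∞) be non-decreasing with c(n) → ∞. Define Λₙ(X) = inf{Σ_{i=1}^n ρᵢ(Xᵢ) | Σᵢ Xᵢ = X}. If W ∈ Σ_{i=1}^m dom(ρᵢ) for some m, and each Λₙ is exact on its domain (the infimum is attained whenever finite), then there exist n* ∈ ℕ and X₁, ..., X_{n*} with Σᵢ Xᵢ = W minimizing Σ_{i=1}^n ρᵢ(Xᵢ) + c(n) over all n ∈ ℕ and all decompositions of W into n parts. -/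
/-!
Since `ρᵢ(0) = 0`, every conjugate `ρᵢ*(φ₀)` lies in `[0, M]`, and the
Fenchel–Young inequality `ρᵢ(x) ≥ φ₀(x) - ρᵢ*(φ₀)` summed over any decomposition of `W`
gives the uniform bound `Λₙ(W) ≥ φ₀(W) - M`. As `Λₘ(W) < ∞` and `c(n) → ∞`, only finitely
many `n` satisfy `Λₙ(W) + c(n) ≤ Λₘ(W) + c(m)`, so `n ↦ Λₙ(W) + c(n)` attains its minimum
at some `n*`, where `Λ_{n*}(W)` is finite; exactness of `Λ_{n*}` yields the optimal split.
-/

/-- The convex conjugate of `f : X → [-∞, ∞]` at a continuous linear functional. -/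
noncomputable def conj {X : Type*} [AddCommGroup X] [Module ℝ X] [TopologicalSpace X]
    (f : X → EReal) (φ : X →L[ℝ] ℝ) : EReal :=
  ⨆ x : X, ((φ x : ℝ) : EReal) - f x

/-- The risk sharing functional of the first `n` agents:
`Λₙ(w) = inf {∑_{i<n} ρᵢ(xᵢ) | ∑ xᵢ = w}`. -/
noncomputable def Lam {X : Type*} [AddCommGroup X] [Module ℝ X]
    (ρ : ℕ → X → EReal) (n : ℕ) (w : X) : EReal :=
  sInf {s : EReal | ∃ f : Fin n → X, ∑ i, f i = w ∧ s = ∑ i, ρ i.1 (f i)}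

open Filter

theorem EReal.coe_finset_sum {ι : Type*} (s : Finset ι) (g : ι → ℝ) :
    ((∑ i ∈ s, g i : ℝ) : EReal) = ∑ i ∈ s, (g i : EReal) := by
  classical
  induction s using Finset.cons_induction with
  | empty => simp
  | cons i s hi ih => rw [Finset.sum_cons, Finset.sum_cons, EReal.coe_add, ih]

theorem exists_forall_le_of_finite_setOf_le {α β : Type*} [LinearOrder β] (f : α → β) (a : α)
    (h : Set.Finite {b | f b ≤ f a}) : ∃ a₀, ∀ b, f a₀ ≤ f b := by
  obtain ⟨a₀, ha₀, hmin⟩ := Set.exists_min_image _ f h ⟨a, le_rfl⟩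
  exact ⟨a₀, fun b => (le_total (f b) (f a)).elim (hmin b) ha₀.trans⟩

theorem exists_forall_add_le_of_tendsto_atTop (Λ : ℕ → EReal) (L : ℝ)
    (hL : ∀ n, (L : EReal) ≤ Λ n) (m : ℕ) (hm : Λ m ≠ ⊤) {c : ℕ → ℝ}
    (hc : Tendsto c atTop atTop) :
    ∃ n₀, Λ n₀ ≠ ⊤ ∧ ∀ n, Λ n₀ + c n₀ ≤ Λ n + c n := by
  set r : ℝ := (Λ m).toReal + c m
  have hr : Λ m + c m = r := by
    rw [EReal.coe_add, EReal.coe_toReal hm (ne_bot_of_le_ne_bot (EReal.coe_ne_bot L) (hL m))]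
  have hfin : Set.Finite {n | Λ n + c n ≤ Λ m + c m} := by
    have hcofin : ∀ᶠ n in cofinite, r - L < c n :=
      Nat.cofinite_eq_atTop ▸ hc.eventually_gt_atTop (r - L)
    refine (eventually_cofinite.1 hcofin).subset fun n hn => ?_
    have hLc : ((L + c n : ℝ) : EReal) ≤ r := by
      rw [EReal.coe_add, ← hr]
      exact (add_le_add_left (hL n) _).trans hn
    show ¬ r - L < c n
    linarith [EReal.coe_le_coe_iff.1 hLc]
  obtain ⟨n₀, hn₀⟩ := exists_forall_le_of_finite_setOf_le (fun n => Λ n + c n) m hfin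
  refine ⟨n₀, fun htop => ?_, hn₀⟩
  have := hn₀ m
  rw [htop, EReal.top_add_of_ne_bot (EReal.coe_ne_bot _), hr, top_le_iff] at this
  exact EReal.coe_ne_top r this

theorem Lam_le_sum {X : Type*} [AddCommGroup X] [Module ℝ X] (ρ : ℕ → X → EReal) {n : ℕ} {w : X}
    (g : Fin n → X) (hg : ∑ i, g i = w) :
    Lam ρ n w ≤ ∑ i, ρ i.1 (g i) :=
  sInf_le ⟨g, hg, rfl⟩

section Conjugate

variable {X : Type*} [AddCommGroup X] [Module ℝ X] [TopologicalSpace X]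

theorem coe_sub_conj_le (f : X → EReal) (φ : X →L[ℝ] ℝ) (x : X) :
    (φ x : EReal) - conj f φ ≤ f x := by
  have h : (φ x : EReal) - f x ≤ conj f φ := le_iSup (fun y => (φ y : EReal) - f y) x
  generalize f x = y at h ⊢
  induction y with
  -- `f x = ⊥` would make `conj f φ = ⊤`, so no finiteness assumption is needed
  | bot => simp_all
  | top => exact le_top
  | coe t => exact EReal.sub_le_of_le_add' ((EReal.sub_le_iff_le_add (by simp) (by simp)).1 h)

theorem conj_nonneg {f : X → EReal} (hf : f 0 ≤ 0) (φ : X →L[ℝ] ℝ) : 0 ≤ conj f φ := by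
  refine le_trans ?_ (le_iSup (fun y => (φ y : EReal) - f y) 0)
  simpa using hf

theorem coe_sub_le_of_conj_le {f : X → EReal} {φ : X →L[ℝ] ℝ} {a : ℝ} (h : conj f φ ≤ a)
    (x : X) : ((φ x - a : ℝ) : EReal) ≤ f x :=
  calc ((φ x - a : ℝ) : EReal) = (φ x : EReal) - a := EReal.coe_sub _ _
    _ ≤ (φ x : EReal) - conj f φ := EReal.sub_le_sub le_rfl h
    _ ≤ f x := coe_sub_conj_le f φ x

theorem coe_sub_le_Lam (ρ : ℕ → X → EReal) (hρ : ∀ i, ρ i 0 ≤ 0) (φ : X →L[ℝ] ℝ) (M : ℝ)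
    (hM : ∀ n, ∑ i ∈ Finset.range n, conj (ρ i) φ ≤ M) (n : ℕ) (w : X) :
    ((φ w - M : ℝ) : EReal) ≤ Lam ρ n w := by
  have hconj_le : ∀ i, conj (ρ i) φ ≤ M := fun i =>
    (Finset.single_le_sum (fun j _ => conj_nonneg (hρ j) φ) (Finset.self_mem_range_succ i)).trans
      (hM (i + 1))
  set a : ℕ → ℝ := fun i => (conj (ρ i) φ).toReal
  have ha : ∀ i, conj (ρ i) φ = a i := fun i =>
    (EReal.coe_toReal (ne_top_of_le_ne_top (EReal.coe_ne_top M) (hconj_le i))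
      (ne_bot_of_le_ne_bot EReal.zero_ne_bot (conj_nonneg (hρ i) φ))).symm
  have hsum_a : ∑ i ∈ Finset.range n, a i ≤ M := by
    have := hM n
    rw [Finset.sum_congr rfl fun i _ => ha i, ← EReal.coe_finset_sum] at this
    exact_mod_cast this
  refine le_sInf ?_
  rintro _ ⟨g, hg, rfl⟩
  calc ((φ w - M : ℝ) : EReal) ≤ ((∑ i, (φ (g i) - a i) : ℝ) : EReal) := by
        rw [EReal.coe_le_coe_iff, Finset.sum_sub_distrib, ← map_sum, hg,
          Fin.sum_univ_eq_sum_range a]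
        linarith
    _ = ∑ i, ((φ (g i) - a i : ℝ) : EReal) := EReal.coe_finset_sum _ _
    _ ≤ ∑ i, ρ i.1 (g i) := Finset.sum_le_sum fun i _ => coe_sub_le_of_conj_le (ha i).le (g i)

end Conjugate

theorem optimal_portfolio_split_general {X : Type*} [AddCommGroup X] [Module ℝ X]
    [TopologicalSpace X]
    (ρ : ℕ → X → EReal)
    (hnorm : ∀ i, ρ i 0 = 0)
    (φ₀ : X →L[ℝ] ℝ) (M : ℝ)
    (hφ₀ : ∀ n : ℕ, ∑ i ∈ Finset.range n, conj (ρ i) φ₀ ≤ (M : EReal))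
    (c : ℕ → ℝ)
    (hcinf : Filter.Tendsto c Filter.atTop Filter.atTop)
    (hexact : ∀ (n : ℕ) (w : X), Lam ρ n w ≠ ⊤ → Lam ρ n w ≠ ⊥ →
      ∃ f : Fin n → X, ∑ i, f i = w ∧ ∑ i, ρ i.1 (f i) = Lam ρ n w)
    (W : X) (m : ℕ) (hW : ∃ f : Fin m → X, ∑ i, f i = W ∧ ∀ i, ρ i.1 (f i) ≠ ⊤) :
    ∃ (nstar : ℕ) (f : Fin nstar → X), ∑ i, f i = W ∧
      ∀ (n : ℕ) (g : Fin n → X), ∑ i, g i = W →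
        (∑ i, ρ i.1 (f i)) + (c nstar : EReal) ≤ (∑ i, ρ i.1 (g i)) + (c n : EReal) := by
  obtain ⟨f₀, hf₀, hf₀_ne_top⟩ := hW
  have hlow := fun n => coe_sub_le_Lam ρ (fun i => (hnorm i).le) φ₀ M hφ₀ n W
  have hm : Lam ρ m W ≠ ⊤ := ne_top_of_le_ne_top
    (Finset.sum_induction _ (· ≠ ⊤) (fun _ _ => EReal.add_ne_top) EReal.zero_ne_top
      fun i _ => hf₀_ne_top i)
    (Lam_le_sum ρ f₀ hf₀)
  obtain ⟨nstar, hnstar_ne_top, hnstar_min⟩ :=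
    exists_forall_add_le_of_tendsto_atTop (Lam ρ · W) _ hlow m hm hcinf
  obtain ⟨f, hf, hf_val⟩ := hexact nstar W hnstar_ne_top
    (ne_bot_of_le_ne_bot (EReal.coe_ne_bot _) (hlow nstar))
  refine ⟨nstar, f, hf, fun n g hg => ?_⟩
  rw [hf_val]
  exact (hnstar_min n).trans (add_le_add_left (Lam_le_sum ρ g hg) _)

/-- Existence of optimal portfolio splits: given normalised proper convex risk
measures `(ρᵢ)` that are infinitely supportable by some `φ₀`, a non-decreasing cost
function `c` with `c(n) → ∞`, exactness of each `Λₙ` on its domain, and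
`W ∈ ∑_{i<m} dom(ρᵢ)`, there exist `n*` and a decomposition of `W` into `n*`
parts minimising `∑ᵢ ρᵢ(Xᵢ) + c(n)` over all `n` and all decompositions. -/
theorem optimal_portfolio_split {X : Type*} [AddCommGroup X] [Module ℝ X]
    [TopologicalSpace X]
    (ρ : ℕ → X → EReal)
    (hbot : ∀ i x, ρ i x ≠ ⊥) (hproper : ∀ i, ∃ x, ρ i x ≠ ⊤)
    (hconv : ∀ i (x y : X) (a b : ℝ), 0 ≤ a → 0 ≤ b → a + b = 1 →
      ρ i (a • x + b • y) ≤ (a : EReal) * ρ i x + (b : EReal) * ρ i y)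
    (hnorm : ∀ i, ρ i 0 = 0)
    (φ₀ : X →L[ℝ] ℝ) (M : ℝ)
    (hφ₀ : ∀ n : ℕ, ∑ i ∈ Finset.range n, conj (ρ i) φ₀ ≤ (M : EReal))
    (c : ℕ → ℝ) (hc0 : ∀ n, 0 ≤ c n) (hcmono : Monotone c)
    (hcinf : Filter.Tendsto c Filter.atTop Filter.atTop)
    (hexact : ∀ (n : ℕ) (w : X), Lam ρ n w ≠ ⊤ → Lam ρ n w ≠ ⊥ →
      ∃ f : Fin n → X, ∑ i, f i = w ∧ ∑ i, ρ i.1 (f i) = Lam ρ n w)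
    (W : X) (m : ℕ) (hW : ∃ f : Fin m → X, ∑ i, f i = W ∧ ∀ i, ρ i.1 (f i) ≠ ⊤) :
    ∃ (nstar : ℕ) (f : Fin nstar → X), ∑ i, f i = W ∧
      ∀ (n : ℕ) (g : Fin n → X), ∑ i, g i = W →
        (∑ i, ρ i.1 (f i)) + (c nstar : EReal) ≤ (∑ i, ρ i.1 (g i)) + (c n : EReal) :=
  optimal_portfolio_split_general ρ hnorm φ₀ M hφ₀ c hcinf hexact W m hW
end
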